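/- arXiv:2105.12240 — 3 statements merged into one kernel-verified Lean document; each statement's English description precedes it below -/
import Mathlib

section
/- Let R be a commutative Noetherian ring and M a finitely generated R-module. If M is isomorphic as an R-module to its double dual Hom_R(Hom_R(M,R),R), then M is reflexive, i.e. the natural evaluation map M → Hom_R(Hom_R(M,R),R) is an isomorphism. -/
universe u

/-- If a finitely generated module over a commutative Noetherian ring is (abstractly)
isomorphic to its double dual, then it is reflexive: the natural evaluation map
`M → Hom_R(Hom_R(M,R),R)` is an isomorphism. -/
theorem reflexive_of_iso_double_dual (R : Type u) (M : Type u) [CommRing R]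
    [IsNoetherianRing R] [AddCommGroup M] [Module R M] [Module.Finite R M]
    (h : Nonempty (M ≃ₗ[R] Module.Dual R (Module.Dual R M))) :
    Module.IsReflexive R M := by
  obtain ⟨φ⟩ := h
  -- The dual of a finitely generated module over a Noetherian ring is Noetherian.
  obtain ⟨n, π, hπ⟩ := Module.Finite.exists_fin' R M
  haveI : IsNoetherian R (Module.Dual R M) :=
    isNoetherian_of_injective π.dualMap (π.dualMap_injective_of_surjective hπ)
  set d := (Module.Dual.eval R M).dualMap with hd
  set e := Module.Dual.eval R (Module.Dual R M) with he
  -- the fundamental identity `d ∘ e = id`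
  have hde : ∀ f, d (e f) = f := fun f => by ext m; rfl
  have hdsurj : Function.Surjective d := fun f => ⟨e f, hde f⟩
  -- `d` is injective: compose with the iso `φ.dualMap.symm` to get a surjective
  -- endomorphism of the Noetherian module `Dual R M`, which is injective.
  have hdinj : Function.Injective d := by
    have hv : Function.Surjective (d ∘ₗ (φ.dualMap.symm : Module.Dual R M ≃ₗ[R] _).toLinearMap) :=
      hdsurj.comp φ.dualMap.symm.surjective
    have hi : Function.Injective (d ∘ₗ φ.dualMap.symm.toLinearMap) :=
      IsNoetherian.injective_of_surjective_endomorphism _ hv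
    intro x y hxy
    have hx : (d ∘ₗ φ.dualMap.symm.toLinearMap) (φ.dualMap x)
        = (d ∘ₗ φ.dualMap.symm.toLinearMap) (φ.dualMap y) := by
      simp only [LinearMap.comp_apply, LinearEquiv.coe_coe, LinearEquiv.symm_apply_apply]
      exact hxy
    exact φ.dualMap.injective (hi hx)
  -- hence `e` is bijective, i.e. `Dual R M` is reflexive
  have hebij : Function.Bijective e := by
    constructor
    · intro x y hxy
      rw [← hde x, ← hde y, hxy]
    · intro y
      exact ⟨d y, hdinj (hde (d y))⟩
  haveI : Module.IsReflexive R (Module.Dual R M) := ⟨hebij⟩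
  -- the dual of a reflexive module is reflexive, so the double dual is reflexive,
  -- and reflexivity transfers along the isomorphism `φ`.
  exact Module.equiv φ.symm
end

section
/- Let R be a commutative Noetherian ring, S a finite birational extension of R, and M a finitely generated R-module. If the R-module structure on M extends to an S-module structure (compatible with the inclusion R ⊆ S), then the trace ideal tr(M) is contained in the conductor c_R(S). -/
set_option synthInstance.maxHeartbeats 1000000
set_option maxHeartbeats 1000000

universe u

/-- A commutative ring is semilocal if it has only finitely many maximal ideals. -/
def IsSemilocalRing (A : Type u) [CommRing A] : Prop :=
  {m : Ideal A | m.IsMaximal}.Finite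

/-- A Noetherian ring of Krull dimension one is Cohen–Macaulay iff it has no embedded
(associated) primes. -/
def IsOneDimCohenMacaulay (A : Type u) [CommRing A] : Prop :=
  IsNoetherianRing A ∧ ringKrullDim A = 1 ∧
    ∀ p : Ideal A, IsAssociatedPrime p A → p ∈ minimalPrimes A

/-- A one-dimensional ring is equidimensional if every minimal prime has coheight one. -/
def IsEquidimOfDimOne (A : Type u) [CommRing A] : Prop :=
  ∀ p ∈ minimalPrimes A, ringKrullDim (A ⧸ p) = 1

/-- An ideal `I` is stable if `x I = I ^ 2` for some `x ∈ I`. -/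
def Ideal.IsStable {A : Type u} [CommRing A] (I : Ideal A) : Prop :=
  ∃ x ∈ I, Ideal.span {x} * I = I ^ 2

/-- An ideal `I` of `A` is integrally closed (in `A`) if every element of `A` which is
integral over `I` (i.e. satisfies an equation `r ^ n + c₁ r ^ (n-1) + ⋯ + cₙ = 0` with
`cᵢ ∈ I ^ i`) already lies in `I`. -/
def Ideal.IsIntegrallyClosedIdeal {A : Type u} [CommRing A] (I : Ideal A) : Prop :=
  ∀ (r : A) (n : ℕ), 0 < n → ∀ c : ℕ → A, (∀ i, 1 ≤ i → i ≤ n → c i ∈ I ^ i) →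
    r ^ n + ∑ i ∈ Finset.range n, c (i + 1) * r ^ (n - (i + 1)) = 0 → r ∈ I

/-- An ideal of a one-dimensional equidimensional CM ring has height one iff it is proper
and contains a nonzerodivisor (i.e. is a regular proper ideal). -/
def Ideal.IsHeightOne {A : Type u} [CommRing A] (I : Ideal A) : Prop :=
  I ≠ ⊤ ∧ ∃ x ∈ I, x ∈ nonZeroDivisors A

/-- A ring is Arf if it is semilocal, equidimensional Cohen–Macaulay of dimension one, and
every integrally closed height-one ideal is stable. -/
def IsArfRing (A : Type u) [CommRing A] : Prop :=
  IsSemilocalRing A ∧ IsOneDimCohenMacaulay A ∧ IsEquidimOfDimOne A ∧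
    ∀ I : Ideal A, I.IsHeightOne → I.IsIntegrallyClosedIdeal → I.IsStable

/-- A module over a one-dimensional CM ring is maximal Cohen–Macaulay iff it is finitely
generated, nonzero and torsion-free. -/
def IsMCMModule (A : Type u) (M : Type u) [CommRing A] [AddCommGroup M] [Module A M] : Prop :=
  Module.Finite A M ∧ Nontrivial M ∧
    ∀ a ∈ nonZeroDivisors A, ∀ m : M, a • m = 0 → m = 0

/-- A module is indecomposable iff it is nonzero and its only idempotent endomorphisms are
`0` and `1`. -/
def IsIndecomposableModule (A : Type u) (M : Type u) [Ring A] [AddCommGroup M] [Module A M] :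
    Prop :=
  Nontrivial M ∧ ∀ f : Module.End A M, f * f = f → f = 0 ∨ f = 1

/-- The endomorphism ring `(J :_{Q(R)} J) = End_R(J)` of an ideal `J`, realized as the
subalgebra of the total ring of fractions consisting of those elements multiplying `J`
into `J`. -/
def colonRing (R : Type u) [CommRing R] (J : Ideal R) : Subalgebra R (FractionRing R) where
  carrier := {q : FractionRing R |
    ∀ x ∈ J, ∃ y ∈ J, q * algebraMap R (FractionRing R) x = algebraMap R (FractionRing R) y}
  mul_mem' := by
    intro a b ha hb x hx
    obtain ⟨y, hy, hby⟩ := hb x hx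
    obtain ⟨z, hz, haz⟩ := ha y hy
    exact ⟨z, hz, by rw [mul_assoc, hby, haz]⟩
  one_mem' := fun x hx => ⟨x, hx, one_mul _⟩
  add_mem' := by
    intro a b ha hb x hx
    obtain ⟨y, hy, hay⟩ := ha x hx
    obtain ⟨z, hz, hbz⟩ := hb x hx
    exact ⟨y + z, J.add_mem hy hz, by rw [add_mul, hay, hbz, map_add]⟩
  algebraMap_mem' := fun r x hx => ⟨r * x, J.mul_mem_left r hx, (map_mul _ _ _).symm⟩

/-- The trace ideal of a module: the ideal generated by images of all linear functionals. -/
def traceIdeal (R : Type u) (M : Type u) [CommRing R] [AddCommGroup M] [Module R M] : Ideal R :=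
  ⨆ f : M →ₗ[R] R, LinearMap.range f

/-- The conductor of a birational extension `S ⊆ Q(R)` of `R`: the set of elements of `R`
multiplying `S` into (the image of) `R`. -/
def conductorIdeal (R : Type u) [CommRing R] (S : Subalgebra R (FractionRing R)) : Ideal R where
  carrier := {x : R | ∀ s ∈ S, ∃ y : R,
    algebraMap R (FractionRing R) x * s = algebraMap R (FractionRing R) y}
  zero_mem' := fun s _ => ⟨0, by simp⟩
  add_mem' := by
    intro a b ha hb s hs
    obtain ⟨y, hy⟩ := ha s hs
    obtain ⟨z, hz⟩ := hb s hs
    exact ⟨y + z, by rw [map_add, add_mul, hy, hz, map_add]⟩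
  smul_mem' := by
    intro c x hx s hs
    obtain ⟨y, hy⟩ := hx s hs
    exact ⟨c * y, by rw [smul_eq_mul, map_mul, map_mul, mul_assoc, hy]⟩

/-- The blow-up ring `B_A(J_A)` of the Jacobson radical of a birational extension
`A ⊆ Q(R)`, described as a subset of `Q(R)`:  `∪_{n>0} (J^n :_{Q(R)} J^n)`. -/
def blowUpOfJacobson (R : Type u) [CommRing R] (A : Subalgebra R (FractionRing R)) :
    Set (FractionRing R) :=
  {q : FractionRing R | ∃ n : ℕ, 0 < n ∧
    ∀ x ∈ ((⊥ : Ideal A).jacobson ^ n), ∃ y ∈ ((⊥ : Ideal A).jacobson ^ n),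
      q * (x : FractionRing R) = (y : FractionRing R)}

/-- Let `S` be a finite birational extension of a commutative Noetherian ring `R` and `M` a
finitely generated `R`-module.  If the `R`-module structure of `M` extends to an `S`-module
structure (equivalently, there is an `R`-algebra map `S → End_R(M)`), then the trace ideal
of `M` is contained in the conductor of `S` into `R`. -/
theorem trace_le_conductor_of_module_structure (R : Type u) [CommRing R] [IsNoetherianRing R]
    (S : Subalgebra R (FractionRing R)) (hfin : Module.Finite R ↥S)
    (M : Type u) [AddCommGroup M] [Module R M] [Module.Finite R M]
    (h : Nonempty (↥S →ₐ[R] Module.End R M)) :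
    traceIdeal R M ≤ conductorIdeal R S := by
  obtain ⟨φ⟩ := h
  refine iSup_le fun f => ?_
  rintro _ ⟨m, rfl⟩
  intro s hs
  obtain ⟨⟨a, b⟩, hab⟩ := IsLocalization.surj (nonZeroDivisors R) s
  set sS : S := ⟨s, hs⟩ with hsS
  have hSb : (b : R) • sS = algebraMap R S a := by
    ext
    have : ((b : R) • sS : S) = (algebraMap R (FractionRing R) (b : R)) * s := by
      simp [hsS, Algebra.smul_def, mul_comm]
    simpa [this, mul_comm] using hab
  have key : (b : R) • (φ sS m) = a • m := by
    have h1 := congrArg φ hSb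
    rw [map_smul, AlgHom.commutes] at h1
    calc (b : R) • φ sS m = ((b : R) • φ sS) m := rfl
      _ = (algebraMap R (Module.End R M) a) m := by rw [h1]
      _ = a • m := rfl
  have hr : (b : R) * f (φ sS m) = a * f m := by
    have := congrArg f key
    simpa [map_smul, smul_eq_mul] using this
  refine ⟨f (φ sS m), ?_⟩
  have hu := IsLocalization.map_units (FractionRing R) b
  refine hu.mul_right_cancel ?_
  rw [mul_assoc, hab, ← map_mul, ← map_mul]
  congr 1
  rw [mul_comm (f m) a, ← hr, mul_comm]
end

section
/- Let R be a commutative Noetherian ring, S a finite birational extension of R, and M a finitely generated reflexive R-module. If the trace ideal tr(M) is contained in the conductor c_R(S), then the R-module structure on M extends to an S-module structure (compatible with the inclusion R ⊆ S). -/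
set_option synthInstance.maxHeartbeats 1000000
set_option maxHeartbeats 1000000

universe u

/-! For `s ∈ S` and a functional `f : M → R`, the values of `f` lie in `tr(M) ⊆ c_R(S)`, so
`s • f` is again a functional. This makes `S` act on `M^*`, hence by transposition on
`M^{**} ≅ M`, and the action is characterised by `f (s • m) = s * f m` in `Q(R)`. Functionals
separate the points of a reflexive module and `R → Q(R)` is injective, so the algebra-hom
identities of this action reduce to identities in `Q(R)`. -/

open Module

theorem Module.eq_of_forall_dual_apply_eq {R M : Type*} [CommSemiring R] [AddCommMonoid M]
    [Module R M] [IsReflexive R M] {x y : M} (hxy : ∀ f : Dual R M, f x = f y) : x = y :=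
  (evalEquiv R M).injective (LinearMap.ext hxy)

section

variable {R : Type u} [CommRing R] {S : Subalgebra R (FractionRing R)}

noncomputable def conductorMul (s : S) : conductorIdeal R S →ₗ[R] R :=
  (LinearEquiv.ofInjective (Algebra.linearMap R (FractionRing R))
      (IsFractionRing.injective R (FractionRing R))).symm.toLinearMap ∘ₗ
    (LinearMap.mulLeft R (s : FractionRing R) ∘ₗ Algebra.linearMap R (FractionRing R) ∘ₗ
      (conductorIdeal R S).subtype).codRestrict _ fun x => by
        obtain ⟨y, hy⟩ := x.2 s s.2
        exact ⟨y, hy.symm.trans (mul_comm _ _)⟩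

theorem algebraMap_conductorMul (s : S) (x : conductorIdeal R S) :
    algebraMap R (FractionRing R) (conductorMul s x) = s * algebraMap R (FractionRing R) x :=
  LinearEquiv.ofInjective_symm_apply (f := Algebra.linearMap R (FractionRing R))
    (h := IsFractionRing.injective R (FractionRing R)) _

theorem Module.Dual.apply_mem_traceIdeal {M : Type u} [AddCommGroup M] [Module R M]
    (f : Dual R M) (m : M) : f m ∈ traceIdeal R M :=
  le_iSup (fun f : Dual R M => LinearMap.range f) f ⟨m, rfl⟩

variable {M : Type u} [AddCommGroup M] [Module R M] (h : traceIdeal R M ≤ conductorIdeal R S)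

noncomputable def dualConductorMul (s : S) : Dual R M →ₗ[R] Dual R M where
  toFun f := conductorMul s ∘ₗ f.codRestrict _ fun m => h (f.apply_mem_traceIdeal m)
  map_add' f g := by
    ext m
    apply IsFractionRing.injective R (FractionRing R)
    simp [algebraMap_conductorMul, mul_add]
  map_smul' r f := by
    ext m
    apply IsFractionRing.injective R (FractionRing R)
    simp [algebraMap_conductorMul, mul_left_comm]

theorem algebraMap_dualConductorMul_apply (s : S) (f : Dual R M) (m : M) :
    algebraMap R (FractionRing R) (dualConductorMul h s f m) =
      s * algebraMap R (FractionRing R) (f m) :=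
  algebraMap_conductorMul s _

variable [IsReflexive R M]

theorem Module.End.ext_of_algebraMap_dual_apply {u v : Module.End R M}
    (huv : ∀ (f : Dual R M) (m : M), algebraMap R (FractionRing R) (f (u m)) =
      algebraMap R (FractionRing R) (f (v m))) : u = v :=
  LinearMap.ext fun m => eq_of_forall_dual_apply_eq fun f =>
    IsFractionRing.injective R (FractionRing R) (huv f m)

noncomputable def endConductorMul (s : S) : Module.End R M :=
  (evalEquiv R M).symm.toLinearMap ∘ₗ Dual.transpose (dualConductorMul h s) ∘ₗ Dual.eval R M

theorem algebraMap_apply_endConductorMul (s : S) (f : Dual R M) (m : M) :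
    algebraMap R (FractionRing R) (f (endConductorMul h s m)) =
      s * algebraMap R (FractionRing R) (f m) := by
  simpa [endConductorMul, Dual.transpose_apply] using algebraMap_dualConductorMul_apply h s f m

noncomputable def algHomOfTraceLeConductor : S →ₐ[R] Module.End R M where
  toFun := endConductorMul h
  map_one' := End.ext_of_algebraMap_dual_apply fun f m => by
    simp [algebraMap_apply_endConductorMul]
  map_mul' s t := End.ext_of_algebraMap_dual_apply fun f m => by
    simp [algebraMap_apply_endConductorMul, mul_assoc]
  map_zero' := End.ext_of_algebraMap_dual_apply fun f m => by
    simp [algebraMap_apply_endConductorMul]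
  map_add' s t := End.ext_of_algebraMap_dual_apply fun f m => by
    simp [algebraMap_apply_endConductorMul, add_mul]
  commutes' r := End.ext_of_algebraMap_dual_apply fun f m => by
    simp [algebraMap_apply_endConductorMul]

end

theorem module_structure_of_trace_le_conductor_general (R : Type u) [CommRing R]
    (S : Subalgebra R (FractionRing R))
    (M : Type u) [AddCommGroup M] [Module R M]
    (hrefl : Module.IsReflexive R M)
    (h : traceIdeal R M ≤ conductorIdeal R S) :
    Nonempty (↥S →ₐ[R] Module.End R M) :=
  ⟨algHomOfTraceLeConductor h⟩

/-- Let `S` be a finite birational extension of a commutative Noetherian ring `R` and `M` a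
finitely generated reflexive `R`-module.  If the trace ideal of `M` is contained in the
conductor of `S` into `R`, then the `R`-module structure of `M` extends to an
`S`-module structure (equivalently, there is an `R`-algebra map `S → End_R(M)`). -/
theorem module_structure_of_trace_le_conductor (R : Type u) [CommRing R] [IsNoetherianRing R]
    (S : Subalgebra R (FractionRing R)) (hfin : Module.Finite R ↥S)
    (M : Type u) [AddCommGroup M] [Module R M] [Module.Finite R M]
    (hrefl : Module.IsReflexive R M)
    (h : traceIdeal R M ≤ conductorIdeal R S) :
    Nonempty (↥S →ₐ[R] Module.End R M) :=
  module_structure_of_trace_le_conductor_general R S M hrefl h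
end
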